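/- arXiv:2005.05637 — 2 statements merged into one kernel-verified Lean document; each statement's English description precedes it below -/
import Mathlib

section
/- Let λ : Q → Q' be a morphism of quivers. Define ξ : ℤ^{Q_0} × ℤ^{Q_0} → ℤ by ξ(d,e) = Σ_{v≠w ∈ Q_0 : λ_0(v)=λ_0(w)} d(v)e(w) + Σ_{a ∈ Q_1 : there is no a' ∈ Q_1' with (a,a') ∈ λ_1} d(t(a))e(h(a)). Then for all d,e ∈ ℤ^{Q_0}: χ_{Q'}(λ_*(d), λ_*(e)) = χ_Q(d,e) + ξ(d,e). -/
/-- A quiver: a finite directed graph with vertex set `V`, edge set `E`, and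
head and tail maps `h, t : E → V`. -/
structure QuiverData where
  V : Type
  E : Type
  [fV : Fintype V]
  [fE : Fintype E]
  [dV : DecidableEq V]
  [dE : DecidableEq E]
  h : E → V
  t : E → V

attribute [instance] QuiverData.fV QuiverData.fE QuiverData.dV QuiverData.dE

/-- A morphism of quivers `λ : Q → Q'`: a map `f0` on vertices together with a
relation `f1 ⊆ Q₁ × Q₁'` on edges, satisfying conditions (i)–(iii) of
Definition 5.6 of the paper. -/
structure QMor (Q Q' : QuiverData) where
  f0 : Q.V → Q'.V
  f1 : Set (Q.E × Q'.E)
  compat : ∀ p ∈ f1, f0 (Q.h p.1) = Q'.h p.2 ∧ f0 (Q.t p.1) = Q'.t p.2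
  lift : ∀ (v w : Q.V) (e' : Q'.E), f0 v = Q'.h e' → f0 w = Q'.t e' →
    ∃! e : Q.E, (e, e') ∈ f1 ∧ Q.h e = v ∧ Q.t e = w
  inj : ∀ p ∈ f1, ∀ q ∈ f1, p.1 = q.1 → p.2 = q.2

/-- Composition of relations. -/
def relComp {A B C : Type*} (r : Set (A × B)) (s : Set (B × C)) : Set (A × C) :=
  {p | ∃ b, (p.1, b) ∈ r ∧ (b, p.2) ∈ s}

/-- The diagonal relation. -/
def diagRel (A : Type*) : Set (A × A) := {p | p.1 = p.2}

open scoped Classical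

/-- The Euler form of the quiver `Q`. -/
def eulerForm (Q : QuiverData) (d e : Q.V → ℤ) : ℤ :=
  ∑ v, d v * e v - ∑ a : Q.E, d (Q.t a) * e (Q.h a)

/-- The pushforward of dimension vectors along a quiver morphism:
`λ_*(d)(v') = ∑_{v : λ₀(v) = v'} d(v)`. -/
noncomputable def pushDim {Q Q' : QuiverData} (l : QMor Q Q') (d : Q.V → ℤ) : Q'.V → ℤ :=
  fun v' => ∑ v ∈ Finset.univ.filter (fun v => l.f0 v = v'), d v

/-- The correction form `ξ` associated to a quiver morphism `λ`. -/
noncomputable def xiForm {Q Q' : QuiverData} (l : QMor Q Q') (d e : Q.V → ℤ) : ℤ :=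
  (∑ p ∈ Finset.univ.filter
      (fun p : Q.V × Q.V => p.1 ≠ p.2 ∧ l.f0 p.1 = l.f0 p.2), d p.1 * e p.2) +
  (∑ a ∈ Finset.univ.filter
      (fun a : Q.E => ¬ ∃ a' : Q'.E, (a, a') ∈ l.f1), d (Q.t a) * e (Q.h a))

/-!
Expanding `λ_*(d)(v') λ_*(e)(v')` gives `d(v) e(w)` over pairs of vertices in the fibre of `v'`:
the diagonal pairs make up the vertex term of `χ_Q`, the others the first term of `ξ`. By
conditions (ii) and (iii), `a ↦ (t a, h a)` identifies the arrows of `Q` over an arrow `a'` of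
`Q'` with the pairs in the fibres of `t' a'` and `h' a'`, and each arrow of `Q` lies over at most
one arrow of `Q'`; so the arrow term of `χ_{Q'}` is that of `χ_Q` minus the second term of `ξ`.
-/

namespace Finset

variable {α β R : Type*} [Fintype α] [NonUnitalNonAssocSemiring R]

theorem sum_fiber_mul_sum_fiber [Fintype β] [DecidableEq β] (f : α → β) (d e : α → R) :
    ∑ b, (∑ a ∈ univ.filter (fun a => f a = b), d a) * ∑ a ∈ univ.filter (fun a => f a = b), e a =
      ∑ p ∈ univ.filter (fun p : α × α => f p.1 = f p.2), d p.1 * e p.2 := by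
  rw [← sum_fiberwise _ (fun p : α × α => f p.1)]
  refine sum_congr rfl fun b _ => ?_
  rw [sum_mul_sum, ← sum_product']
  refine sum_congr ?_ fun _ _ => rfl
  ext ⟨a, a'⟩
  simp only [mem_product, mem_filter, mem_univ, true_and]
  grind

theorem sum_filter_eq_sum_diag_add_sum_filter_ne [DecidableEq α] [DecidableEq β] (f : α → β)
    (g : α → α → R) :
    ∑ p ∈ univ.filter (fun p : α × α => f p.1 = f p.2), g p.1 p.2 =
      ∑ a, g a a + ∑ p ∈ univ.filter (fun p : α × α => p.1 ≠ p.2 ∧ f p.1 = f p.2), g p.1 p.2 := by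
  rw [← sum_filter_add_sum_filter_not _ (fun p : α × α => p.1 = p.2), filter_filter,
    filter_filter]
  congr 1
  · have hdiag : univ.filter (fun p : α × α => f p.1 = f p.2 ∧ p.1 = p.2) = univ.diag := by
      ext ⟨a, a'⟩
      simp only [mem_filter, mem_univ, true_and, mem_diag]
      grind
    rw [hdiag, sum_diag]
  · simp only [and_comm]

theorem sum_sum_filter_mem_eq_sum_filter_exists [Fintype β] (r : Set (α × β))
    (hr : ∀ p ∈ r, ∀ q ∈ r, p.1 = q.1 → p.2 = q.2) (g : α → R) :
    ∑ b, ∑ a ∈ univ.filter (fun a => (a, b) ∈ r), g a =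
      ∑ a ∈ univ.filter (fun a => ∃ b, (a, b) ∈ r), g a := by
  have hinj : Set.InjOn Prod.fst (univ.filter (· ∈ r) : Finset (α × β)) := fun p hp q hq h =>
    Prod.ext h (hr p (by simpa using hp) q (by simpa using hq) h)
  have himage : (univ.filter (· ∈ r)).image Prod.fst = univ.filter (fun a => ∃ b, (a, b) ∈ r) := by
    ext
    simp
  rw [← himage, sum_image hinj, sum_filter, Fintype.sum_prod_type_right]
  simp only [sum_filter]

end Finset

namespace QMor

open Finset

variable {Q Q' : QuiverData} (l : QMor Q Q') (d e : Q.V → ℤ)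

theorem sum_pushDim_mul_pushDim :
    ∑ v', pushDim l d v' * pushDim l e v' =
      ∑ v, d v * e v +
        ∑ p ∈ univ.filter (fun p : Q.V × Q.V => p.1 ≠ p.2 ∧ l.f0 p.1 = l.f0 p.2), d p.1 * e p.2 :=
  (sum_fiber_mul_sum_fiber l.f0 d e).trans
    (sum_filter_eq_sum_diag_add_sum_filter_ne l.f0 fun v w => d v * e w)

theorem pushDim_tail_mul_pushDim_head (a' : Q'.E) :
    pushDim l d (Q'.t a') * pushDim l e (Q'.h a') =
      ∑ a ∈ univ.filter (fun a => (a, a') ∈ l.f1), d (Q.t a) * e (Q.h a) := by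
  rw [pushDim, pushDim, sum_mul_sum, ← sum_product']
  symm
  refine sum_bij (fun a _ => (Q.t a, Q.h a)) ?_ ?_ ?_ fun _ _ => rfl
  · intro a ha
    obtain ⟨hh, ht⟩ := l.compat _ (mem_filter.mp ha).2
    simpa [mem_product] using ⟨ht, hh⟩
  · intro a₁ ha₁ a₂ ha₂ h
    obtain ⟨ht, hh⟩ := Prod.mk.inj h
    obtain ⟨hh₁, ht₁⟩ := l.compat _ (mem_filter.mp ha₁).2
    exact (l.lift _ _ a' hh₁ ht₁).unique ⟨(mem_filter.mp ha₁).2, rfl, rfl⟩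
      ⟨(mem_filter.mp ha₂).2, hh.symm, ht.symm⟩
  · rintro ⟨v, w⟩ hvw
    simp only [mem_product, mem_filter, mem_univ, true_and] at hvw
    obtain ⟨a, ⟨ha, rfl, rfl⟩, -⟩ := l.lift w v a' hvw.2 hvw.1
    exact ⟨a, by simpa using ha, rfl⟩

theorem sum_pushDim_tail_mul_pushDim_head :
    ∑ a', pushDim l d (Q'.t a') * pushDim l e (Q'.h a') =
      ∑ a ∈ univ.filter (fun a => ∃ a', (a, a') ∈ l.f1), d (Q.t a) * e (Q.h a) := by
  simp only [pushDim_tail_mul_pushDim_head]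
  exact sum_sum_filter_mem_eq_sum_filter_exists l.f1 l.inj _

end QMor

/-- For a morphism of quivers `λ : Q → Q'` and all
`d, e ∈ ℤ^{Q₀}`: `χ_{Q'}(λ_* d, λ_* e) = χ_Q(d, e) + ξ(d, e)`. -/
theorem eulerForm_push {Q Q' : QuiverData} (l : QMor Q Q') (d e : Q.V → ℤ) :
    eulerForm Q' (pushDim l d) (pushDim l e) = eulerForm Q d e + xiForm l d e := by
  unfold eulerForm xiForm
  rw [l.sum_pushDim_mul_pushDim, l.sum_pushDim_tail_mul_pushDim_head,
    ← Finset.sum_filter_add_sum_filter_not Finset.univ (fun a => ∃ a', (a, a') ∈ l.f1)]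
  ring
end

section
/- Let Q be a quiver, (μ_v)_{v∈Q_0} real constants with associated slope function μ, and d ∈ ℕ^{Q_0}∖{0}. For ε > 0 define μ̃_±^ε on ℕ^{Q_0}×ℕ ∖ {(0,0)} by μ̃_±^ε(e,m) = (Σ_{v∈Q_0} μ_v e(v) + m(μ(d) ± ε))/(Σ_{v∈Q_0} e(v) + m). Then there exists ε_0 > 0 such that for all ε with 0 < ε < ε_0 the following hold: (a) μ̃_±^ε(e,0) = μ(e) for all e ∈ ℕ^{Q_0}∖{0}; (b) for all e,f ∈ ℕ^{Q_0}∖{0} with e+f = d and μ(e) < μ(f): μ̃_+^ε(e,0) < μ̃_+^ε(f,1), μ̃_+^ε(e,1) < μ̃_+^ε(f,0), μ̃_−^ε(e,0) < μ̃_−^ε(f,1), and μ̃_−^ε(e,1) < μ̃_−^ε(f,0); (c) for all e,f ∈ ℕ^{Q_0}∖{0} with e+f = d and μ(e) = μ(f): μ̃_+^ε(e,0) < μ̃_+^ε(f,1) and μ̃_−^ε(e,1) < μ̃_−^ε(f,0); (d) μ̃_+^ε(0,1) > μ(d) and μ̃_−^ε(0,1) < μ(d). -/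
/-- The slope of a dimension vector `e` with respect to constants `μc`. -/
noncomputable def slopeFn {Q : QuiverData} (μc : Q.V → ℝ) (e : Q.V → ℕ) : ℝ :=
  (∑ v, μc v * (e v : ℝ)) / (∑ v, (e v : ℝ))

/-- The slope on the extended quiver `Q̃` (one extra vertex `∞` with slope constant
`c`), evaluated at the dimension vector which equals `e` on `Q₀` and `m` at `∞`:
`μ̃(e,m) = (∑_v μc v · e v + m·c) / (∑_v e v + m)`. -/
noncomputable def slopeExt {Q : QuiverData} (μc : Q.V → ℝ) (c : ℝ) (e : Q.V → ℕ) (m : ℕ) : ℝ :=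
  ((∑ v, μc v * (e v : ℝ)) + m * c) / ((∑ v, (e v : ℝ)) + m)


/-! Both kinds of slope are mediants: `μ(e + f)` lies between `μ(e)` and `μ(f)`, and
`μ̃(e, 1)` lies between `μ(e)` and the constant `c` at `∞`, strictly unless the two ends agree.
Take `ε₀` below every nonzero gap `|μ(e) - μ(d)|` with `e ≤ d` (finitely many). Then for
`e + f = d` and `μ(e) < μ(f)`, both constants `μ(d) ± ε` lie strictly between `μ(e)` and `μ(f)`,
which gives (b); in (c) all three slopes coincide and only the sign of `±ε` matters. -/

section Mediant

variable {K : Type*} [Field K] [LinearOrder K] [IsStrictOrderedRing K] {a b c d x : K}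

theorem le_add_div_add (hb : 0 < b) (hd : 0 < d) (hab : x ≤ a / b) (hcd : x ≤ c / d) :
    x ≤ (a + c) / (b + d) := by
  rw [le_div_iff₀ hb] at hab
  rw [le_div_iff₀ hd] at hcd
  rw [le_div_iff₀ (add_pos hb hd)]
  linarith

theorem lt_add_div_add (hb : 0 < b) (hd : 0 < d) (hab : x ≤ a / b) (hcd : x < c / d) :
    x < (a + c) / (b + d) := by
  rw [le_div_iff₀ hb] at hab
  rw [lt_div_iff₀ hd] at hcd
  rw [lt_div_iff₀ (add_pos hb hd)]
  linarith

theorem add_div_add_le (hb : 0 < b) (hd : 0 < d) (hab : a / b ≤ x) (hcd : c / d ≤ x) :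
    (a + c) / (b + d) ≤ x := by
  rw [div_le_iff₀ hb] at hab
  rw [div_le_iff₀ hd] at hcd
  rw [div_le_iff₀ (add_pos hb hd)]
  linarith

theorem add_div_add_lt (hb : 0 < b) (hd : 0 < d) (hab : a / b ≤ x) (hcd : c / d < x) :
    (a + c) / (b + d) < x := by
  rw [div_le_iff₀ hb] at hab
  rw [div_lt_iff₀ hd] at hcd
  rw [div_lt_iff₀ (add_pos hb hd)]
  linarith

end Mediant

theorem Set.Finite.exists_pos_le_dist {α : Type*} [MetricSpace α] {s : Set α} (hs : s.Finite)
    (x : α) : ∃ ε > 0, ∀ y ∈ s, y ≠ x → ε ≤ dist y x := by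
  have hx := hs.sdiff.isClosed.isOpen_compl.mem_nhds (show x ∈ (s \ {x})ᶜ by simp)
  obtain ⟨ε, hε, hball⟩ := Metric.mem_nhds_iff.1 hx
  refine ⟨ε, hε, fun y hy hyx => ?_⟩
  by_contra! h
  exact hball (Metric.mem_ball.2 h) ⟨hy, hyx⟩

theorem sum_natCast_pos_of_ne_zero {ι : Type*} [Fintype ι] {e : ι → ℕ} (he : e ≠ 0) :
    0 < ∑ i, (e i : ℝ) := by
  obtain ⟨i, hi⟩ := Function.ne_iff.1 he
  exact Finset.sum_pos' (fun _ _ => by positivity)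
    ⟨i, Finset.mem_univ i, Nat.cast_pos.2 (Nat.pos_of_ne_zero hi)⟩

section Slope

variable {Q : QuiverData} (μc : Q.V → ℝ) {c x : ℝ} {e f : Q.V → ℕ}

theorem slopeFn_add :
    slopeFn μc (e + f) =
      ((∑ v, μc v * (e v : ℝ)) + ∑ v, μc v * (f v : ℝ)) /
        ((∑ v, (e v : ℝ)) + ∑ v, (f v : ℝ)) := by
  simp only [slopeFn, Pi.add_apply, Nat.cast_add, mul_add, Finset.sum_add_distrib]

theorem slopeFn_add_mem_Icc (he : e ≠ 0) (hf : f ≠ 0) (h : slopeFn μc e ≤ slopeFn μc f) :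
    slopeFn μc (e + f) ∈ Set.Icc (slopeFn μc e) (slopeFn μc f) := by
  have hNe := sum_natCast_pos_of_ne_zero he
  have hNf := sum_natCast_pos_of_ne_zero hf
  rw [slopeFn_add]
  exact ⟨le_add_div_add hNe hNf le_rfl h, add_div_add_le hNe hNf h le_rfl⟩

theorem slopeFn_add_mem_Ioo (he : e ≠ 0) (hf : f ≠ 0) (h : slopeFn μc e < slopeFn μc f) :
    slopeFn μc (e + f) ∈ Set.Ioo (slopeFn μc e) (slopeFn μc f) := by
  have hNe := sum_natCast_pos_of_ne_zero he
  have hNf := sum_natCast_pos_of_ne_zero hf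
  refine ⟨?_, ?_⟩
  · rw [slopeFn_add]
    exact lt_add_div_add hNe hNf le_rfl h
  · rw [add_comm, slopeFn_add]
    exact add_div_add_lt hNf hNe le_rfl h

theorem exists_pos_le_abs_slopeFn_sub (d : Q.V → ℕ) :
    ∃ ε₀ > 0, ∀ e ≤ d, slopeFn μc e ≠ slopeFn μc d →
      ε₀ ≤ |slopeFn μc e - slopeFn μc d| := by
  obtain ⟨ε₀, hε₀, hgap⟩ := ((Set.finite_Iic d).image (slopeFn μc)).exists_pos_le_dist
    (slopeFn μc d)
  exact ⟨ε₀, hε₀, fun e he hne => hgap _ ⟨e, he, rfl⟩ hne⟩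

@[simp]
theorem slopeExt_zero_right : slopeExt μc c e 0 = slopeFn μc e := by
  simp [slopeExt, slopeFn]

@[simp]
theorem slopeExt_zero_one : slopeExt μc c 0 1 = c := by
  simp [slopeExt]

theorem slopeExt_one :
    slopeExt μc c e 1 = ((∑ v, μc v * (e v : ℝ)) + c) / ((∑ v, (e v : ℝ)) + 1) := by
  simp [slopeExt]

theorem lt_slopeExt_one (he : e ≠ 0) (hx : x ≤ slopeFn μc e) (hc : x < c) :
    x < slopeExt μc c e 1 := by
  rw [slopeExt_one]
  exact lt_add_div_add (sum_natCast_pos_of_ne_zero he) one_pos hx (by simpa using hc)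

theorem slopeExt_one_lt (he : e ≠ 0) (hx : slopeFn μc e ≤ x) (hc : c < x) :
    slopeExt μc c e 1 < x := by
  rw [slopeExt_one]
  exact add_div_add_lt (sum_natCast_pos_of_ne_zero he) one_pos hx (by simpa using hc)

end Slope

theorem pair_slope_properties_general (Q : QuiverData) (μc : Q.V → ℝ)
    (d : Q.V → ℕ) :
    ∃ ε₀ : ℝ, 0 < ε₀ ∧ ∀ ε : ℝ, 0 < ε → ε < ε₀ →
      -- (a)
      ((∀ e : Q.V → ℕ, e ≠ 0 →
          slopeExt μc (slopeFn μc d + ε) e 0 = slopeFn μc e ∧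
          slopeExt μc (slopeFn μc d - ε) e 0 = slopeFn μc e) ∧
      -- (b)
      (∀ e f : Q.V → ℕ, e ≠ 0 → f ≠ 0 → e + f = d →
          slopeFn μc e < slopeFn μc f →
          slopeExt μc (slopeFn μc d + ε) e 0 < slopeExt μc (slopeFn μc d + ε) f 1 ∧
          slopeExt μc (slopeFn μc d + ε) e 1 < slopeExt μc (slopeFn μc d + ε) f 0 ∧
          slopeExt μc (slopeFn μc d - ε) e 0 < slopeExt μc (slopeFn μc d - ε) f 1 ∧
          slopeExt μc (slopeFn μc d - ε) e 1 < slopeExt μc (slopeFn μc d - ε) f 0) ∧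
      -- (c)
      (∀ e f : Q.V → ℕ, e ≠ 0 → f ≠ 0 → e + f = d →
          slopeFn μc e = slopeFn μc f →
          slopeExt μc (slopeFn μc d + ε) e 0 < slopeExt μc (slopeFn μc d + ε) f 1 ∧
          slopeExt μc (slopeFn μc d - ε) e 1 < slopeExt μc (slopeFn μc d - ε) f 0) ∧
      -- (d)
      (slopeFn μc d < slopeExt μc (slopeFn μc d + ε) 0 1 ∧
        slopeExt μc (slopeFn μc d - ε) 0 1 < slopeFn μc d)) := by
  obtain ⟨ε₀, hε₀, hgap⟩ := exists_pos_le_abs_slopeFn_sub μc d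
  refine ⟨ε₀, hε₀, fun ε hε hεε₀ => ⟨fun e _ => by simp, ?_, ?_, by simp [hε]⟩⟩
  · rintro e f he hf rfl hlt
    obtain ⟨hed, hdf⟩ := slopeFn_add_mem_Ioo μc he hf hlt
    have hed' : slopeFn μc e < slopeFn μc (e + f) - ε := by
      have := hgap e le_self_add hed.ne
      rw [abs_of_neg (sub_neg.2 hed)] at this
      linarith
    have hdf' : slopeFn μc (e + f) + ε < slopeFn μc f := by
      have := hgap f le_add_self hdf.ne'
      rw [abs_of_pos (sub_pos.2 hdf)] at this
      linarith
    simp only [slopeExt_zero_right]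
    exact ⟨lt_slopeExt_one μc hf hlt.le (by linarith), slopeExt_one_lt μc he hlt.le hdf',
      lt_slopeExt_one μc hf hlt.le hed', slopeExt_one_lt μc he hlt.le (by linarith)⟩
  · rintro e f he hf rfl heq
    obtain ⟨hed, hdf⟩ := slopeFn_add_mem_Icc μc he hf heq.le
    simp only [slopeExt_zero_right]
    exact ⟨lt_slopeExt_one μc hf heq.le (by linarith),
      slopeExt_one_lt μc he heq.le (by linarith)⟩

/-- For a quiver `Q`, slope constants `(μ_v)`, and
`d ∈ ℕ^{Q₀}∖{0}`, there is `ε₀ > 0` such that for all `0 < ε < ε₀` the perturbed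
pair slope functions `μ̃±^ε` (slope `μ(d) ± ε` at the extra vertex `∞`) satisfy
properties (a)–(d). -/
theorem pair_slope_properties (Q : QuiverData) (μc : Q.V → ℝ)
    (d : Q.V → ℕ) (hd : d ≠ 0) :
    ∃ ε₀ : ℝ, 0 < ε₀ ∧ ∀ ε : ℝ, 0 < ε → ε < ε₀ →
      -- (a)
      ((∀ e : Q.V → ℕ, e ≠ 0 →
          slopeExt μc (slopeFn μc d + ε) e 0 = slopeFn μc e ∧
          slopeExt μc (slopeFn μc d - ε) e 0 = slopeFn μc e) ∧
      -- (b)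
      (∀ e f : Q.V → ℕ, e ≠ 0 → f ≠ 0 → e + f = d →
          slopeFn μc e < slopeFn μc f →
          slopeExt μc (slopeFn μc d + ε) e 0 < slopeExt μc (slopeFn μc d + ε) f 1 ∧
          slopeExt μc (slopeFn μc d + ε) e 1 < slopeExt μc (slopeFn μc d + ε) f 0 ∧
          slopeExt μc (slopeFn μc d - ε) e 0 < slopeExt μc (slopeFn μc d - ε) f 1 ∧
          slopeExt μc (slopeFn μc d - ε) e 1 < slopeExt μc (slopeFn μc d - ε) f 0) ∧
      -- (c)
      (∀ e f : Q.V → ℕ, e ≠ 0 → f ≠ 0 → e + f = d →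
          slopeFn μc e = slopeFn μc f →
          slopeExt μc (slopeFn μc d + ε) e 0 < slopeExt μc (slopeFn μc d + ε) f 1 ∧
          slopeExt μc (slopeFn μc d - ε) e 1 < slopeExt μc (slopeFn μc d - ε) f 0) ∧
      -- (d)
      (slopeFn μc d < slopeExt μc (slopeFn μc d + ε) 0 1 ∧
        slopeExt μc (slopeFn μc d - ε) 0 1 < slopeFn μc d)) :=
  pair_slope_properties_general Q μc d
end
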